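/- Let a, Ξ, α, β, h̃ : ℝ → ℝ be smooth with Ξ' = a, let κ ∈ ℝ with κ ≠ 0, and suppose h̃''(x²) = κ β(x²) e^{Ξ(x²)} for all x². Let D be the connection on ℝ² whose only nonzero Christoffel symbols are Γ¹_{12} = Γ¹_{21} = a(x²) and Γ¹_{22}(x¹,x²) = (2α(x²)/κ) e^{(½ κ x¹ e^{Ξ(x²)} − Ξ(x²))} + β(x²) + x¹ (a(x²)² + a'(x²)). Then the function h(x¹,x²) = h̃(x²) + κ x¹ e^{Ξ(x²)} satisfies the affine gradient Ricci soliton equation Hes_h(∂_i,∂_j) + 2ρ^{sym}_{ij} = 0 on ℝ² for all i,j ∈ {1,2}. -/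

import Mathlib

noncomputable section

/-- Points of the affine surface (local coordinates `(x¹,x²)`). -/
abbrev Pt2 := Fin 2 → ℝ

/-- Partial derivative `∂_{x^i}`. -/
def pd2 (i : Fin 2) (f : Pt2 → ℝ) (p : Pt2) : ℝ :=
  fderiv ℝ f p (Pi.single i 1)

/-- The Ricci tensor `ρ_{ij}` of the affine connection with Christoffel symbols `Γ^k_{ij}`:
`ρ_{ij} = Σ_k ∂_{x^k}Γ^k_{ij} − ∂_{x^i}(Σ_k Γ^k_{kj}) + Σ_{k,l}(Γ^k_{kl}Γ^l_{ij} − Γ^k_{il}Γ^l_{kj})`. -/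
def ricciD (Γ : Fin 2 → Fin 2 → Fin 2 → Pt2 → ℝ) (i j : Fin 2) (p : Pt2) : ℝ :=
  (∑ k : Fin 2, pd2 k (Γ k i j) p) - pd2 i (fun q => ∑ k : Fin 2, Γ k k j q) p
    + ∑ k : Fin 2, ∑ l : Fin 2, (Γ k k l p * Γ l i j p - Γ k i l p * Γ l k j p)

/-- The symmetric part `ρ^{sym}_{ij} = ½(ρ_{ij}+ρ_{ji})` of the Ricci tensor. -/
def ricciDSym (Γ : Fin 2 → Fin 2 → Fin 2 → Pt2 → ℝ) (i j : Fin 2) (p : Pt2) : ℝ :=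
  (ricciD Γ i j p + ricciD Γ j i p) / 2

/-- The affine Hessian `Hes_h(∂_i,∂_j) = ∂_i∂_j h − Σ_k Γ^k_{ij} ∂_k h`. -/
def hessD (Γ : Fin 2 → Fin 2 → Fin 2 → Pt2 → ℝ) (h : Pt2 → ℝ) (i j : Fin 2) (p : Pt2) : ℝ :=
  pd2 i (pd2 j h) p - ∑ k : Fin 2, Γ k i j p * pd2 k h p

/-- The covariant derivative of the Ricci tensor:
`(D_{∂_i}ρ)_{jk} = ∂_i ρ_{jk} − Σ_l Γ^l_{ij} ρ_{lk} − Σ_l Γ^l_{ik} ρ_{jl}`. -/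
def covRicciD (Γ : Fin 2 → Fin 2 → Fin 2 → Pt2 → ℝ) (i j k : Fin 2) (p : Pt2) : ℝ :=
  pd2 i (fun q => ricciD Γ j k q) p - (∑ l : Fin 2, Γ l i j p * ricciD Γ l k p)
    - ∑ l : Fin 2, Γ l i k p * ricciD Γ j l p

/-- The connection whose only nonzero Christoffel symbols are
`Γ¹_{12} = Γ¹_{21} = a(x²)` and `Γ¹_{22} = b(x¹,x²)`
(symmetric rank-one Ricci tensor with parallel kernel). -/
def ΓK (a : ℝ → ℝ) (b : Pt2 → ℝ) : Fin 2 → Fin 2 → Fin 2 → Pt2 → ℝ := fun k i j x =>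
  if k = 0 ∧ ((i = 0 ∧ j = 1) ∨ (i = 1 ∧ j = 0)) then a (x 1)
  else if k = 0 ∧ i = 1 ∧ j = 1 then b x
  else 0

lemma pd2_two (F : ℝ × ℝ → ℝ) (p : Pt2) (hF : DifferentiableAt ℝ F (p 0, p 1)) :
    pd2 0 (fun x => F (x 0, x 1)) p = deriv (fun s => F (s, p 1)) (p 0) ∧
    pd2 1 (fun x => F (x 0, x 1)) p = deriv (fun s => F (p 0, s)) (p 1) := by
  set π : Pt2 →L[ℝ] ℝ × ℝ :=
    (ContinuousLinearMap.proj 0).prod (ContinuousLinearMap.proj 1) with hπdef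
  have hπ : HasFDerivAt (fun x : Pt2 => (x 0, x 1)) π p := π.hasFDerivAt
  have hcomp : HasFDerivAt (fun x : Pt2 => F (x 0, x 1))
      ((fderiv ℝ F (p 0, p 1)).comp π) p := hF.hasFDerivAt.comp p hπ
  have h1 : HasDerivAt (fun s : ℝ => F (s, p 1)) (fderiv ℝ F (p 0, p 1) (1, 0)) (p 0) :=
    hF.hasFDerivAt.comp_hasDerivAt (p 0) ((hasDerivAt_id (p 0)).prodMk (hasDerivAt_const _ _))
  have h2 : HasDerivAt (fun s : ℝ => F (p 0, s)) (fderiv ℝ F (p 0, p 1) (0, 1)) (p 1) :=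
    hF.hasFDerivAt.comp_hasDerivAt (p 1) ((hasDerivAt_const _ _).prodMk (hasDerivAt_id (p 1)))
  refine ⟨?_, ?_⟩
  · rw [pd2, hcomp.fderiv, h1.deriv]
    simp [hπdef, Pi.single_eq_same, Pi.single_eq_of_ne]
  · rw [pd2, hcomp.fderiv, h2.deriv]
    simp [hπdef, Pi.single_eq_same, Pi.single_eq_of_ne]

/-- Let `Ξ' = a`, `κ ≠ 0` and `h̃'' = κ β e^Ξ`.  For the connection
whose only nonzero Christoffel symbols are `Γ¹_{12} = Γ¹_{21} = a(x²)` and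
`Γ¹_{22} = (2α/κ) e^{½κx¹e^Ξ − Ξ} + β + x¹(a² + a')`, the function
`h = h̃(x²) + κ x¹ e^{Ξ(x²)}` is an affine gradient Ricci soliton potential on `ℝ²`. -/
theorem stmt16 (a Ξ α β ht : ℝ → ℝ)
    (ha : ContDiff ℝ (⊤ : ℕ∞) a) (hΞ : ContDiff ℝ (⊤ : ℕ∞) Ξ) (hα : ContDiff ℝ (⊤ : ℕ∞) α)
    (hβ : ContDiff ℝ (⊤ : ℕ∞) β) (hht : ContDiff ℝ (⊤ : ℕ∞) ht)
    (hΞ' : ∀ t, deriv Ξ t = a t)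
    (κ : ℝ) (hκ : κ ≠ 0)
    (hode : ∀ t, deriv (deriv ht) t = κ * β t * Real.exp (Ξ t))
    (b : Pt2 → ℝ)
    (hbdef : b = fun x : Pt2 =>
      (2 * α (x 1) / κ) * Real.exp ((1 / 2) * κ * x 0 * Real.exp (Ξ (x 1)) - Ξ (x 1))
        + β (x 1) + x 0 * ((a (x 1)) ^ 2 + deriv a (x 1)))
    (h : Pt2 → ℝ)
    (hdef : h = fun x : Pt2 => ht (x 1) + κ * x 0 * Real.exp (Ξ (x 1))) :
    ∀ x : Pt2, ∀ i j : Fin 2,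
      hessD (ΓK a b) h i j x + 2 * ricciDSym (ΓK a b) i j x = 0 := by
  have haD := ha.differentiable (by simp)
  have hΞD := hΞ.differentiable (by simp)
  have hαD := hα.differentiable (by simp)
  have hβD := hβ.differentiable (by simp)
  have hhtD := hht.differentiable (by simp)
  have hdaD : Differentiable ℝ (deriv a) :=
    ((contDiff_infty_iff_deriv.mp (ha.of_le (by simp))).2).differentiable (by simp)
  have hdhtD : Differentiable ℝ (deriv ht) :=
    ((contDiff_infty_iff_deriv.mp (hht.of_le (by simp))).2).differentiable (by simp)
  have hΞda : ∀ t, HasDerivAt Ξ (a t) t := fun t => hΞ' t ▸ (hΞD t).hasDerivAt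
  -- pd2 of the zero function
  have pz : ∀ (i : Fin 2) (p : Pt2), pd2 i (fun _ : Pt2 => (0:ℝ)) p = 0 := by
    intro i p; simp [pd2]
  -- pd2 of x ↦ a (x 1)
  have paF : (fun x : Pt2 => a (x 1)) = fun x : Pt2 => (fun q : ℝ × ℝ => a q.2) (x 0, x 1) := rfl
  have padiff : ∀ q : ℝ × ℝ, DifferentiableAt ℝ (fun q : ℝ × ℝ => a q.2) q := by
    intro q; fun_prop
  have pa0 : ∀ p : Pt2, pd2 0 (fun x : Pt2 => a (x 1)) p = 0 := by
    intro p
    rw [paF, (pd2_two _ p (padiff _)).1]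
    simp
  have pa1 : ∀ p : Pt2, pd2 1 (fun x : Pt2 => a (x 1)) p = deriv a (p 1) := by
    intro p
    rw [paF, (pd2_two _ p (padiff _)).2]
  -- pd2 of b
  have hbF : b = fun x : Pt2 => (fun q : ℝ × ℝ =>
      (2 * α q.2 / κ) * Real.exp ((1 / 2) * κ * q.1 * Real.exp (Ξ q.2) - Ξ q.2)
        + β q.2 + q.1 * ((a q.2) ^ 2 + deriv a q.2)) (x 0, x 1) := hbdef
  have hbdiff : ∀ q : ℝ × ℝ, DifferentiableAt ℝ (fun q : ℝ × ℝ =>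
      (2 * α q.2 / κ) * Real.exp ((1 / 2) * κ * q.1 * Real.exp (Ξ q.2) - Ξ q.2)
        + β q.2 + q.1 * ((a q.2) ^ 2 + deriv a q.2)) q := by intro q; fun_prop
  have pb0 : ∀ p : Pt2, pd2 0 b p
      = α (p 1) * Real.exp ((1 / 2) * κ * p 0 * Real.exp (Ξ (p 1)))
        + (a (p 1)) ^ 2 + deriv a (p 1) := by
    intro p
    rw [hbF, (pd2_two _ p (hbdiff _)).1]
    have hd : HasDerivAt (fun s : ℝ =>
        (2 * α (p 1) / κ) * Real.exp ((1 / 2) * κ * s * Real.exp (Ξ (p 1)) - Ξ (p 1))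
          + β (p 1) + s * ((a (p 1)) ^ 2 + deriv a (p 1)))
        ((2 * α (p 1) / κ) * (Real.exp ((1 / 2) * κ * p 0 * Real.exp (Ξ (p 1)) - Ξ (p 1))
            * ((1 / 2) * κ * Real.exp (Ξ (p 1))))
          + 1 * ((a (p 1)) ^ 2 + deriv a (p 1))) (p 0) := by
      have hin : HasDerivAt (fun s : ℝ => (1 / 2) * κ * s * Real.exp (Ξ (p 1)) - Ξ (p 1))
          ((1 / 2) * κ * Real.exp (Ξ (p 1))) (p 0) := by
        simpa using ((((hasDerivAt_id (p 0)).const_mul ((1 / 2) * κ)).mul_const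
          (Real.exp (Ξ (p 1)))).sub_const (Ξ (p 1)))
      exact ((hin.exp.const_mul _).add_const (β (p 1))).add
        ((hasDerivAt_id (p 0)).mul_const _)
    rw [hd.deriv, Real.exp_sub]
    field_simp
    ring
  -- pd2 of h
  have hhF : h = fun x : Pt2 => (fun q : ℝ × ℝ =>
      ht q.2 + κ * q.1 * Real.exp (Ξ q.2)) (x 0, x 1) := hdef
  have hhdiff : ∀ q : ℝ × ℝ, DifferentiableAt ℝ
      (fun q : ℝ × ℝ => ht q.2 + κ * q.1 * Real.exp (Ξ q.2)) q := by intro q; fun_prop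
  have ph0 : pd2 0 h = fun x : Pt2 => κ * Real.exp (Ξ (x 1)) := by
    funext p
    rw [hhF, (pd2_two _ p (hhdiff _)).1]
    have hd : HasDerivAt (fun s : ℝ => ht (p 1) + κ * s * Real.exp (Ξ (p 1)))
        (κ * 1 * Real.exp (Ξ (p 1))) (p 0) :=
      (((hasDerivAt_id (p 0)).const_mul κ).mul_const (Real.exp (Ξ (p 1)))).const_add (ht (p 1))
    rw [hd.deriv]; ring
  have ph1 : pd2 1 h = fun x : Pt2 =>
      deriv ht (x 1) + κ * x 0 * (Real.exp (Ξ (x 1)) * a (x 1)) := by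
    funext p
    rw [hhF, (pd2_two _ p (hhdiff _)).2]
    have hd : HasDerivAt (fun s : ℝ => ht s + κ * p 0 * Real.exp (Ξ s))
        (deriv ht (p 1) + κ * p 0 * (Real.exp (Ξ (p 1)) * a (p 1))) (p 1) :=
      (hhtD (p 1)).hasDerivAt.add ((hΞda (p 1)).exp.const_mul (κ * p 0))
    rw [hd.deriv]
  -- second derivatives of h
  have ph00 : ∀ p : Pt2, pd2 0 (pd2 0 h) p = 0 := by
    intro p
    rw [ph0]
    have : (fun x : Pt2 => κ * Real.exp (Ξ (x 1)))
        = fun x : Pt2 => (fun q : ℝ × ℝ => κ * Real.exp (Ξ q.2)) (x 0, x 1) := rfl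
    rw [this, (pd2_two (fun q : ℝ × ℝ => κ * Real.exp (Ξ q.2)) p (by fun_prop)).1]
    simp
  have ph10 : ∀ p : Pt2, pd2 1 (pd2 0 h) p = κ * (Real.exp (Ξ (p 1)) * a (p 1)) := by
    intro p
    rw [ph0]
    have heq : (fun x : Pt2 => κ * Real.exp (Ξ (x 1)))
        = fun x : Pt2 => (fun q : ℝ × ℝ => κ * Real.exp (Ξ q.2)) (x 0, x 1) := rfl
    rw [heq, (pd2_two (fun q : ℝ × ℝ => κ * Real.exp (Ξ q.2)) p (by fun_prop)).2]
    have hd : HasDerivAt (fun s : ℝ => κ * Real.exp (Ξ s))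
        (κ * (Real.exp (Ξ (p 1)) * a (p 1))) (p 1) := (hΞda (p 1)).exp.const_mul κ
    rw [hd.deriv]
  have ph01 : ∀ p : Pt2, pd2 0 (pd2 1 h) p = κ * (Real.exp (Ξ (p 1)) * a (p 1)) := by
    intro p
    rw [ph1]
    have heq : (fun x : Pt2 => deriv ht (x 1) + κ * x 0 * (Real.exp (Ξ (x 1)) * a (x 1)))
        = fun x : Pt2 => (fun q : ℝ × ℝ =>
            deriv ht q.2 + κ * q.1 * (Real.exp (Ξ q.2) * a q.2)) (x 0, x 1) := rfl
    rw [heq, (pd2_two (fun q : ℝ × ℝ =>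
      deriv ht q.2 + κ * q.1 * (Real.exp (Ξ q.2) * a q.2)) p (by fun_prop)).1]
    have hd : HasDerivAt
        (fun s : ℝ => deriv ht (p 1) + κ * s * (Real.exp (Ξ (p 1)) * a (p 1)))
        (κ * 1 * (Real.exp (Ξ (p 1)) * a (p 1))) (p 0) :=
      (((hasDerivAt_id (p 0)).const_mul κ).mul_const _).const_add (deriv ht (p 1))
    rw [hd.deriv]; ring
  have ph11 : ∀ p : Pt2, pd2 1 (pd2 1 h) p
      = κ * β (p 1) * Real.exp (Ξ (p 1))
        + κ * p 0 * (Real.exp (Ξ (p 1)) * a (p 1) * a (p 1)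
            + Real.exp (Ξ (p 1)) * deriv a (p 1)) := by
    intro p
    rw [ph1]
    have heq : (fun x : Pt2 => deriv ht (x 1) + κ * x 0 * (Real.exp (Ξ (x 1)) * a (x 1)))
        = fun x : Pt2 => (fun q : ℝ × ℝ =>
            deriv ht q.2 + κ * q.1 * (Real.exp (Ξ q.2) * a q.2)) (x 0, x 1) := rfl
    rw [heq, (pd2_two (fun q : ℝ × ℝ =>
      deriv ht q.2 + κ * q.1 * (Real.exp (Ξ q.2) * a q.2)) p (by fun_prop)).2]
    have hd : HasDerivAt
        (fun s : ℝ => deriv ht s + κ * p 0 * (Real.exp (Ξ s) * a s))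
        (deriv (deriv ht) (p 1)
          + κ * p 0 * (Real.exp (Ξ (p 1)) * a (p 1) * a (p 1)
              + Real.exp (Ξ (p 1)) * deriv a (p 1))) (p 1) := by
      have h2 : HasDerivAt (fun s : ℝ => Real.exp (Ξ s) * a s)
          (Real.exp (Ξ (p 1)) * a (p 1) * a (p 1)
            + Real.exp (Ξ (p 1)) * deriv a (p 1)) (p 1) :=
        (hΞda (p 1)).exp.mul (haD (p 1)).hasDerivAt
      exact (hdhtD (p 1)).hasDerivAt.add (h2.const_mul (κ * p 0))
    show deriv (fun s : ℝ => deriv ht s + κ * p 0 * (Real.exp (Ξ s) * a s)) (p 1) = _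
    rw [hd.deriv, hode]
  have ph0p : ∀ p : Pt2, pd2 0 h p = κ * Real.exp (Ξ (p 1)) := fun p => by rw [ph0]
  have ph1p : ∀ p : Pt2, pd2 1 h p
      = deriv ht (p 1) + κ * p 0 * (Real.exp (Ξ (p 1)) * a (p 1)) := fun p => by rw [ph1]
  -- Christoffel component rewrites
  have hΓ000 : ΓK a b 0 0 0 = fun _ : Pt2 => (0:ℝ) := by funext x; simp [ΓK]
  have hΓ001 : ΓK a b 0 0 1 = fun x : Pt2 => a (x 1) := by funext x; simp [ΓK]
  have hΓ010 : ΓK a b 0 1 0 = fun x : Pt2 => a (x 1) := by funext x; simp [ΓK]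
  have hΓ011 : ΓK a b 0 1 1 = b := by funext x; simp [ΓK]
  have hΓ1 : ∀ i j : Fin 2, ΓK a b 1 i j = fun _ : Pt2 => (0:ℝ) := by
    intro i j; funext x; simp [ΓK]
  have hs0 : (fun q : Pt2 => ∑ k : Fin 2, ΓK a b k k 0 q) = fun _ : Pt2 => (0:ℝ) := by
    funext q; simp [ΓK, Fin.sum_univ_two]
  have hs1 : (fun q : Pt2 => ∑ k : Fin 2, ΓK a b k k 1 q) = fun x : Pt2 => a (x 1) := by
    funext q; simp [ΓK, Fin.sum_univ_two]
  intro p i j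
  have hbp : b p = (2 * α (p 1) / κ)
      * Real.exp ((1 / 2) * κ * p 0 * Real.exp (Ξ (p 1)) - Ξ (p 1))
      + β (p 1) + p 0 * ((a (p 1)) ^ 2 + deriv a (p 1)) := by rw [hbdef]
  fin_cases i <;> fin_cases j <;>
    simp only [hessD, ricciDSym, ricciD, Fin.sum_univ_two, Fin.isValue,
      Fin.mk_zero, Fin.mk_one, hΓ000, hΓ001, hΓ010, hΓ011, hΓ1,
      add_zero, zero_add, mul_zero, zero_mul, sub_zero, zero_sub, mul_one,
      pz, pa0, pa1, pb0, ph00, ph01, ph10, ph11, ph0p, ph1p, hbp]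
  · ring
  · ring
  · ring
  · rw [Real.exp_sub]
    field_simp
    ring


end
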